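/- arXiv:1002.2856 — 2 statements merged into one kernel-verified Lean document; each statement's English description precedes it below -/
import Mathlib

section
/- For a measurable function v on a bounded set Ω, the decreasing rearrangement of the negative part satisfies (v⁻)*(s) = (v*)⁻(|Ω| − s) for almost every s ∈ (0, |Ω|). -/
open MeasureTheory Set Metric Filter

/-- The distribution function `μ(t) = |{x ∈ Ω : u(x) > t}|`. -/
noncomputable def distrib {n : ℕ} (Ω : Set (EuclideanSpace ℝ (Fin n)))
    (u : EuclideanSpace ℝ (Fin n) → ℝ) (t : ℝ) : ℝ :=
  (volume {x ∈ Ω | t < u x}).toReal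

/-- The decreasing rearrangement `u*(s) = inf {t : μ(t) ≤ s}`. -/
noncomputable def rearr {n : ℕ} (Ω : Set (EuclideanSpace ℝ (Fin n)))
    (u : EuclideanSpace ℝ (Fin n) → ℝ) (s : ℝ) : ℝ :=
  sInf {t : ℝ | distrib Ω u t ≤ s}

/-!
Everything depends only on the law `ν` of `v` on `Ω`, a finite measure on `ℝ`, and `v*` is the
generalized inverse of the tail `t ↦ ν (t, ∞)`. The tail of `v⁻` at `t ≥ 0` is `|Ω| - ν [-t, ∞)`,
and it is `|Ω|` at `t < 0`, so the set whose infimum is `(v⁻)*(s)` is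
`{t ≥ 0 | ν [-t, ∞) ≥ |Ω| - s}`. Its infimum is `max (-v*(|Ω| - s)) 0` unless the tail of `ν` is
constant equal to `|Ω| - s` on a nondegenerate interval; such an interval contains a rational, so
only countably many `s` are exceptional.
-/

open Topology

noncomputable def tailInv (ν : Measure ℝ) (s : ℝ) : ℝ :=
  sInf {t : ℝ | ν.real (Ioi t) ≤ s}

lemma csInf_eq_of_Ioi_subset_of_subset_Ici {T : Set ℝ} {m : ℝ} (hIoi : Ioi m ⊆ T)
    (hIci : T ⊆ Ici m) : sInf T = m := by
  refine le_antisymm ?_ (le_csInf (nonempty_Ioi.mono hIoi) hIci)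
  calc sInf T ≤ sInf (Ioi m) := csInf_le_csInf ⟨m, hIci⟩ nonempty_Ioi hIoi
    _ = m := csInf_Ioi

section FiniteMeasure

variable {ν : Measure ℝ} [IsFiniteMeasure ν]

lemma antitone_measureReal_Ioi : Antitone fun t => ν.real (Ioi t) :=
  fun _ _ h => measureReal_mono (Ioi_subset_Ioi h)

lemma tendsto_measureReal_Ioi_atTop : Tendsto (fun t => ν.real (Ioi t)) atTop (𝓝 0) := by
  have hempty : ⋂ t : ℝ, Ioi t = ∅ :=
    eq_empty_of_forall_notMem fun x hx => lt_irrefl x (mem_iInter.1 hx x)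
  have h := tendsto_measure_iInter_atTop (μ := ν) (fun t => measurableSet_Ioi.nullMeasurableSet)
    (fun _ _ h => Ioi_subset_Ioi h) ⟨0, measure_ne_top ν _⟩
  rw [hempty, measure_empty] at h
  exact (ENNReal.tendsto_toReal ENNReal.zero_ne_top).comp h

lemma tendsto_measureReal_Ioi_atBot :
    Tendsto (fun t => ν.real (Ioi t)) atBot (𝓝 (ν.real univ)) := by
  have huniv : ⋃ t : ℝ, Ioi t = univ :=
    eq_univ_of_forall fun x => mem_iUnion.2 ⟨x - 1, by simp⟩
  have h := tendsto_measure_iUnion_atBot (μ := ν) (fun _ _ h => Ioi_subset_Ioi h)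
  rw [huniv] at h
  exact (ENNReal.tendsto_toReal (measure_ne_top ν _)).comp h

lemma lt_measureReal_Ioi_of_lt_tailInv {σ t : ℝ} (hσ : σ < ν.real univ)
    (ht : t < tailInv ν σ) : σ < ν.real (Ioi t) := by
  obtain ⟨t₀, ht₀⟩ :=
    ((tendsto_measureReal_Ioi_atBot (ν := ν)).eventually_const_lt hσ).exists
  have hbdd : BddBelow {t : ℝ | ν.real (Ioi t) ≤ σ} := ⟨t₀, fun τ hτ => by
    by_contra! hτt₀
    exact (ht₀.trans_le (antitone_measureReal_Ioi hτt₀.le)).not_ge hτ⟩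
  by_contra! hle
  exact (csInf_le hbdd hle).not_gt ht

lemma exists_lt_measureReal_Ioi_le_of_tailInv_lt {σ t : ℝ} (hσ : 0 < σ)
    (ht : tailInv ν σ < t) : ∃ τ < t, ν.real (Ioi τ) ≤ σ := by
  obtain ⟨t₀, ht₀⟩ :=
    ((tendsto_measureReal_Ioi_atTop (ν := ν)).eventually_le_const hσ).exists
  obtain ⟨τ, hτ, hτt⟩ := exists_lt_of_csInf_lt ⟨t₀, ht₀⟩ ht
  exact ⟨τ, hτt, hτ⟩

lemma measureReal_map_negPart_Ioi_le_iff {s t : ℝ} (hs : s < ν.real univ) :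
    (ν.map fun y => max (-y) 0).real (Ioi t) ≤ s ↔
      0 ≤ t ∧ ν.real univ - s ≤ ν.real (Ici (-t)) := by
  rw [map_measureReal_apply (by fun_prop) measurableSet_Ioi]
  rcases lt_or_ge t 0 with ht | ht
  · have : (fun y : ℝ => max (-y) 0) ⁻¹' Ioi t = univ :=
      eq_univ_of_forall fun y => lt_max_of_lt_right ht
    rw [this]
    exact iff_of_false (not_le.2 hs) fun h => (not_le.2 ht) h.1
  · have : (fun y : ℝ => max (-y) 0) ⁻¹' Ioi t = (Ici (-t))ᶜ := by
      ext y
      simp only [mem_preimage, mem_Ioi, lt_max_iff, mem_compl_iff, mem_Ici, not_le]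
      constructor
      · rintro (h | h) <;> linarith
      · intro h; left; linarith
    rw [this, measureReal_compl measurableSet_Ici]
    exact ⟨fun h => ⟨ht, by linarith⟩, fun h => by linarith [h.2]⟩

lemma tailInv_map_negPart_of_forall_ne {s : ℝ} (hs₀ : 0 < s) (hs : s < ν.real univ)
    (hq : ∀ q : ℚ, ν.real (Ioi (q : ℝ)) ≠ ν.real univ - s) :
    tailInv (ν.map fun y => max (-y) 0) s = max (-tailInv ν (ν.real univ - s)) 0 := by
  have hσ₀ : 0 < ν.real univ - s := by linarith
  have hσ : ν.real univ - s < ν.real univ := by linarith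
  apply csInf_eq_of_Ioi_subset_of_subset_Ici
  · intro t ht
    rw [mem_Ioi, max_lt_iff] at ht
    rw [mem_ofPred_eq, measureReal_map_negPart_Ioi_le_iff hs]
    refine ⟨ht.2.le, ?_⟩
    calc ν.real univ - s ≤ ν.real (Ioi (-t)) :=
          (lt_measureReal_Ioi_of_lt_tailInv hσ (by linarith)).le
      _ ≤ ν.real (Ici (-t)) := measureReal_mono Ioi_subset_Ici_self
  · intro t ht
    rw [mem_ofPred_eq, measureReal_map_negPart_Ioi_le_iff hs] at ht
    obtain ⟨ht₀, hσt⟩ := ht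
    refine max_le ?_ ht₀
    by_contra! hlt
    obtain ⟨τ, hτt, hτ⟩ :=
      exists_lt_measureReal_Ioi_le_of_tailInv_lt hσ₀ (by linarith : _ < -t)
    -- the tail equals `ν univ - s` on all of `(τ, -t)`
    obtain ⟨q, hτq, hqt⟩ := exists_rat_btwn hτt
    exact hq q (le_antisymm ((antitone_measureReal_Ioi hτq.le).trans hτ)
      (hσt.trans (measureReal_mono (Ici_subset_Ioi.2 hqt))))

theorem ae_tailInv_map_negPart :
    ∀ᵐ s ∂(volume.restrict (Ioo 0 (ν.real univ))),
      tailInv (ν.map fun y => max (-y) 0) s = max (-tailInv ν (ν.real univ - s)) 0 := by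
  have hcount := countable_range fun q : ℚ => ν.real univ - ν.real (Ioi (q : ℝ))
  filter_upwards [ae_restrict_mem measurableSet_Ioo,
    ae_restrict_of_ae (hcount.ae_notMem volume)] with s hs hsq
  refine tailInv_map_negPart_of_forall_ne hs.1 hs.2 fun q hq => hsq ⟨q, ?_⟩
  simp only [hq, sub_sub_cancel]

end FiniteMeasure

lemma rearr_eq_tailInv {n : ℕ} (Ω : Set (EuclideanSpace ℝ (Fin n)))
    {u : EuclideanSpace ℝ (Fin n) → ℝ} (hu : Measurable u) :
    rearr Ω u = tailInv ((volume.restrict Ω).map u) := by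
  funext s
  unfold rearr tailInv
  congr 1
  ext t
  rw [mem_ofPred_eq, mem_ofPred_eq, map_measureReal_apply hu measurableSet_Ioi,
    measureReal_restrict_apply (hu measurableSet_Ioi), inter_comm]
  rfl

theorem rearr_negPart_general {n : ℕ} (Ω : Set (EuclideanSpace ℝ (Fin n)))
    (v : EuclideanSpace ℝ (Fin n) → ℝ)
    (hΩbd : Bornology.IsBounded Ω)
    (hv : Measurable v) :
    ∀ᵐ s ∂(volume.restrict (Set.Ioo (0 : ℝ) (volume Ω).toReal)),
      rearr Ω (fun x => max (-v x) 0) s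
        = max (-(rearr Ω v ((volume Ω).toReal - s))) 0 := by
  have : IsFiniteMeasure (volume.restrict Ω) :=
    isFiniteMeasure_restrict.2 hΩbd.measure_lt_top.ne
  have hM : ((volume.restrict Ω).map v).real univ = (volume Ω).toReal := by
    rw [map_measureReal_apply hv MeasurableSet.univ, preimage_univ, measureReal_restrict_apply_univ]
    rfl
  have hneg : (volume.restrict Ω).map (fun x => max (-v x) 0)
      = ((volume.restrict Ω).map v).map fun y => max (-y) 0 :=
    (Measure.map_map (g := fun y : ℝ => max (-y) 0) (by fun_prop) hv).symm
  rw [rearr_eq_tailInv Ω (u := fun x => max (-v x) 0) (by fun_prop), rearr_eq_tailInv Ω hv, hneg,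
    ← hM]
  exact ae_tailInv_map_negPart

theorem rearr_negPart {n : ℕ} (Ω : Set (EuclideanSpace ℝ (Fin n)))
    (v : EuclideanSpace ℝ (Fin n) → ℝ)
    (hΩmeas : MeasurableSet Ω) (hΩbd : Bornology.IsBounded Ω)
    (hv : Measurable v) :
    ∀ᵐ s ∂(volume.restrict (Set.Ioo (0 : ℝ) (volume Ω).toReal)),
      rearr Ω (fun x => max (-v x) 0) s
        = max (-(rearr Ω v ((volume Ω).toReal - s))) 0 :=
  rearr_negPart_general Ω v hΩbd hv
end

section
/- If u is nonnegative Lipschitz on a bounded Lipschitz domain Ω ⊆ ℝⁿ (n ≥ 2) and there exists γ > 0 with P_Ω{u > t} ≥ γ·μ(t)^(1−1/n) for all t ≥ 0, then the Schwarz symmetrization ũ is Lipschitz on the ball Ω̃ with Lipschitz constant at most L·n·cₙ^(1/n)/γ, where L is the Lipschitz constant of u. -/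
open MeasureTheory Set Metric Filter

/-- `cₙ`: the volume of the unit ball in `ℝⁿ`. -/
noncomputable def unitBallVol (n : ℕ) : ℝ :=
  (volume (Metric.ball (0 : EuclideanSpace ℝ (Fin n)) 1)).toReal

/-- `Ω̃`: the open ball centred at the origin with the same measure as `Ω`. -/
noncomputable def ballSameVol {n : ℕ} (Ω : Set (EuclideanSpace ℝ (Fin n))) :
    Set (EuclideanSpace ℝ (Fin n)) :=
  Metric.ball 0 (((volume Ω).toReal / unitBallVol n) ^ ((1 : ℝ) / n))

/-- The Schwarz symmetrization `ũ(x) = u*(cₙ |x|ⁿ)`. -/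
noncomputable def schwarz {n : ℕ} (Ω : Set (EuclideanSpace ℝ (Fin n)))
    (u : EuclideanSpace ℝ (Fin n) → ℝ) (x : EuclideanSpace ℝ (Fin n)) : ℝ :=
  rearr Ω u (unitBallVol n * ‖x‖ ^ n)

/-- The De Giorgi perimeter of a set `E` relative to an open set `Ω`, defined by
duality with compactly supported `C¹` vector fields of norm at most one. -/
noncomputable def relPerimeter {n : ℕ} (Ω E : Set (EuclideanSpace ℝ (Fin n))) : ℝ :=
  sSup { r : ℝ | ∃ φ : EuclideanSpace ℝ (Fin n) → EuclideanSpace ℝ (Fin n),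
    ContDiff ℝ 1 φ ∧ HasCompactSupport φ ∧ tsupport φ ⊆ Ω ∧ (∀ x, ‖φ x‖ ≤ 1) ∧
    r = ∫ x in E, ∑ i, fderiv ℝ φ x (EuclideanSpace.single i 1) i }

open Topology

/-!
Wherever the distribution function `μ` is differentiable, the perimeter of `{u > t}` is at most
`-L μ'(t)`: test the divergence of a field against a cutoff equal to `1` on `{u > t}` and to `0` at
distance `r` from it, integrate by parts, and note that by the Lipschitz bound the transition
layer lies in `{u > t - L r} \ {u > t}`. Together with the isoperimetric hypothesis this gives
`-(μ^{1/n})' ≥ γ / (L n)` wherever `μ > 0`. Since `μ^{1/n}` is antitone, its jumps and singular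
part only add to the decrease, so integrating yields
`u*(σ₁ⁿ) - u*(σ₂ⁿ) ≤ (L n / γ) (σ₂ - σ₁)`; and `ũ(x) = u*((cₙ^{1/n} |x|)ⁿ)`.
-/

theorem Real.rpow_one_div_natCast_pow {x : ℝ} (hx : 0 ≤ x) {n : ℕ} (hn : n ≠ 0) :
    (x ^ ((1 : ℝ) / n)) ^ n = x := by
  rw [one_div]
  exact rpow_inv_natCast_pow hx hn

theorem MonotoneOn.mul_sub_le_sub_of_le_deriv {f : ℝ → ℝ} {a b c : ℝ} (hab : a ≤ b)
    (hf : MonotoneOn f (Icc a b)) (hc : ∀ x ∈ Ioo a b, DifferentiableAt ℝ f x → c ≤ deriv f x) :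
    c * (b - a) ≤ f b - f a := by
  have hf' : MonotoneOn f (uIcc a b) := by rwa [uIcc_of_le hab]
  have hae : (fun _ => c) ≤ᵐ[volume.restrict (Icc a b)] deriv f := by
    rw [← Measure.restrict_congr_set Ioo_ae_eq_Icc, EventuallyLE,
      ae_restrict_iff' measurableSet_Ioo]
    filter_upwards [hf.ae_differentiableWithinAt_of_mem] with x hx hxo
    exact hc x hxo ((hx (Ioo_subset_Icc_self hxo)).differentiableAt (Icc_mem_nhds hxo.1 hxo.2))
  calc c * (b - a) = ∫ _ in a..b, c := by simp [mul_comm]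
    _ ≤ ∫ x in a..b, deriv f x :=
        intervalIntegral.integral_mono_ae_restrict hab intervalIntegrable_const
          hf'.intervalIntegrable_deriv hae
    _ ≤ f b - f a := (uIcc_of_le (sub_nonneg.2 (hf ⟨le_rfl, hab⟩ ⟨hab, le_rfl⟩ hab)) ▸
        hf'.intervalIntegral_deriv_mem_uIcc).2

theorem HasDerivAt.tendsto_inv_add_mul_sub_comp_sub {g : ℝ → ℝ} {m t : ℝ} (hg : HasDerivAt g m t)
    (K M : ℝ) :
    Tendsto (fun r => (r⁻¹ + M) * (g (t - K * r) - g t)) (𝓝[>] 0) (𝓝 (-K * m)) := by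
  have hinner : HasDerivAt (fun r : ℝ => t - K * r) (-K) 0 := by
    simpa using ((hasDerivAt_id (0 : ℝ)).const_mul K).const_sub t
  have hq : Tendsto (fun r => r⁻¹ * (g (t - K * r) - g t)) (𝓝[>] 0) (𝓝 (-K * m)) := by
    simpa [mul_comm m] using
      ((show HasDerivAt g m (t - K * 0) by simpa using hg).comp 0 hinner).tendsto_slope_zero_right
  have hr : Tendsto (fun r : ℝ => r) (𝓝[>] 0) (𝓝 0) := tendsto_id.mono_left nhdsWithin_le_nhds
  have hlim := hq.add ((hr.const_mul M).mul hq)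
  rw [mul_zero, zero_mul, add_zero] at hlim
  refine hlim.congr' (eventually_mem_nhdsWithin.mono fun r (hr : 0 < r) => ?_)
  field_simp

theorem AntitoneOn.lipschitzOnWith_of_sub_le {f : ℝ → ℝ} {s : Set ℝ} {K : ℝ} (hf : AntitoneOn f s)
    (h : ∀ a ∈ s, ∀ b ∈ s, a ≤ b → f a - f b ≤ K * (b - a)) :
    LipschitzOnWith (Real.toNNReal K) f s := by
  refine LipschitzOnWith.of_dist_le_mul fun a ha b hb => ?_
  rw [Real.dist_eq, Real.dist_eq]
  rcases le_total a b with hab | hba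
  · rw [abs_of_nonneg (sub_nonneg.2 (hf ha hb hab)), abs_of_nonpos (sub_nonpos.2 hab), neg_sub]
    exact (h a ha b hb hab).trans (by gcongr; exact Real.le_coe_toNNReal K)
  · rw [abs_of_nonpos (sub_nonpos.2 (hf hb ha hba)), abs_of_nonneg (sub_nonneg.2 hba), neg_sub]
    exact (h b hb a ha hba).trans (by gcongr; exact Real.le_coe_toNNReal K)

theorem LipschitzOnWith.isBounded_image {α β : Type*} [PseudoMetricSpace α]
    [PseudoMetricSpace β] {K : NNReal} {f : α → β} {s : Set α} (hf : LipschitzOnWith K f s)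
    (hs : Bornology.IsBounded s) : Bornology.IsBounded (f '' s) :=
  isBounded_image_iff.2 ⟨K * diam s, fun _ hx _ hy =>
    (hf.dist_le_mul _ hx _ hy).trans (by gcongr; exact dist_le_diam_of_mem hs hx hy)⟩

theorem lipschitzWith_const_mul_norm {E : Type*} [SeminormedAddCommGroup E] {c : ℝ} (hc : 0 ≤ c) :
    LipschitzWith (Real.toNNReal c) fun x : E => c * ‖x‖ :=
  .of_dist_le_mul fun x y => by
    rw [Real.coe_toNNReal _ hc, Real.dist_eq, ← mul_sub, abs_mul, abs_of_nonneg hc, dist_eq_norm]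
    gcongr
    exact abs_norm_sub_norm_le x y

section Divergence

variable {n : ℕ}

noncomputable def divergence (φ : EuclideanSpace ℝ (Fin n) → EuclideanSpace ℝ (Fin n))
    (x : EuclideanSpace ℝ (Fin n)) : ℝ :=
  ∑ i, fderiv ℝ φ x (EuclideanSpace.single i 1) i

theorem EuclideanSpace.clm_apply_eq_sum_single (T : EuclideanSpace ℝ (Fin n) →L[ℝ] ℝ)
    (y : EuclideanSpace ℝ (Fin n)) : T y = ∑ i, T (EuclideanSpace.single i 1) * y i := by
  conv_lhs => rw [← (EuclideanSpace.basisFun (Fin n) ℝ).sum_repr y]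
  simp [mul_comm]

theorem divergence_eq_zero_of_notMem_tsupport
    {φ : EuclideanSpace ℝ (Fin n) → EuclideanSpace ℝ (Fin n)} {x : EuclideanSpace ℝ (Fin n)}
    (hx : x ∉ tsupport φ) : divergence φ x = 0 := by
  have : fderiv ℝ φ x = 0 := Function.notMem_support.1 fun h => hx (support_fderiv_subset ℝ h)
  simp [divergence, this]

theorem ContDiff.continuous_divergence {φ : EuclideanSpace ℝ (Fin n) → EuclideanSpace ℝ (Fin n)}
    (hφ : ContDiff ℝ 1 φ) : Continuous (divergence φ) := by
  unfold divergence
  fun_prop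

theorem HasCompactSupport.divergence
    {φ : EuclideanSpace ℝ (Fin n) → EuclideanSpace ℝ (Fin n)} (hφ : HasCompactSupport φ) :
    HasCompactSupport (divergence φ) :=
  .intro hφ fun _ => divergence_eq_zero_of_notMem_tsupport

theorem integral_mul_divergence_eq_neg {f : EuclideanSpace ℝ (Fin n) → ℝ} {K : NNReal}
    (hf : LipschitzWith K f) {φ : EuclideanSpace ℝ (Fin n) → EuclideanSpace ℝ (Fin n)}
    (hφ : ContDiff ℝ 1 φ) (hφc : HasCompactSupport φ) :
    ∫ x, f x * divergence φ x = -∫ x, fderiv ℝ f x (φ x) := by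
  obtain ⟨Kφ, hKφ⟩ := hφ.lipschitzWith_of_hasCompactSupport hφc one_ne_zero
  let e (i : Fin n) : EuclideanSpace ℝ (Fin n) := EuclideanSpace.single i 1
  let proj i := EuclideanSpace.proj (𝕜 := ℝ) (ι := Fin n) i
  have hlineDeriv (i : Fin n) (x) : lineDeriv ℝ (proj i ∘ φ) x (e i) = fderiv ℝ φ x (e i) i :=
    (((proj i).hasFDerivAt.comp x (hφ.differentiable one_ne_zero x).hasFDerivAt).hasLineDerivAt
      _).lineDeriv
  have hibp (i : Fin n) :
      ∫ x, f x * fderiv ℝ φ x (e i) i = -∫ x, fderiv ℝ f x (e i) * φ x i := by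
    have hcomp := hf.integral_lineDeriv_mul_eq ((proj i).lipschitz.comp hKφ)
      (hφc.comp_left (map_zero (proj i))) (μ := volume) (-e i)
    rw [neg_neg] at hcomp
    calc ∫ x, f x * fderiv ℝ φ x (e i) i = ∫ x, lineDeriv ℝ (proj i ∘ φ) x (e i) * f x := by
          simp only [hlineDeriv, mul_comm]
      _ = ∫ x, -(fderiv ℝ f x (e i) * φ x i) := by
          rw [← hcomp]
          refine integral_congr_ae ?_
          filter_upwards [hf.ae_differentiableAt] with x hx
          simp [hx.lineDeriv_eq_fderiv, proj]
      _ = -∫ x, fderiv ℝ f x (e i) * φ x i := integral_neg _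
  have hint_left (i : Fin n) : Integrable fun x => f x * fderiv ℝ φ x (e i) i := by
    refine (hf.continuous.mul (by fun_prop)).integrable_of_hasCompactSupport ?_
    have hc : HasCompactSupport fun x => fderiv ℝ φ x (e i) i :=
      (hφc.fderiv (𝕜 := ℝ)).comp_left (by simp)
        (g := fun T : EuclideanSpace ℝ (Fin n) →L[ℝ] EuclideanSpace ℝ (Fin n) => T (e i) i)
    exact hc.mul_left
  have hint_right (i : Fin n) : Integrable fun x => fderiv ℝ f x (e i) * φ x i := by
    refine Integrable.bdd_mul (c := K * ‖e i‖) ?_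
      (measurable_fderiv_apply_const ℝ f _).aestronglyMeasurable
      (.of_forall fun x => ((fderiv ℝ f x).le_opNorm _).trans ?_)
    · exact ((proj i).continuous.comp hφ.continuous).integrable_of_hasCompactSupport
        (hφc.comp_left (map_zero (proj i)))
    · gcongr; exact norm_fderiv_le_of_lipschitz ℝ hf
  calc ∫ x, f x * divergence φ x = ∑ i, ∫ x, f x * fderiv ℝ φ x (e i) i := by
        rw [← integral_finsetSum _ fun i _ => hint_left i]
        simp only [divergence, Finset.mul_sum]
        rfl
    _ = -∫ x, fderiv ℝ f x (φ x) := by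
        simp only [hibp, Finset.sum_neg_distrib, ← integral_finsetSum _ fun i _ => hint_right i,
          e, ← EuclideanSpace.clm_apply_eq_sum_single]

end Divergence

section Cutoff

variable {X : Type*} [PseudoMetricSpace X]

noncomputable def cutoff (E : Set X) (r : ℝ) (x : X) : ℝ := max 0 (1 - infDist x E / r)

theorem cutoff_nonneg (E : Set X) (r : ℝ) (x : X) : 0 ≤ cutoff E r x := le_max_left _ _

theorem cutoff_le_one (E : Set X) {r : ℝ} (hr : 0 ≤ r) (x : X) : cutoff E r x ≤ 1 :=
  max_le zero_le_one (by linarith [div_nonneg (infDist_nonneg (x := x) (s := E)) hr])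

theorem cutoff_of_mem {E : Set X} (r : ℝ) {x : X} (hx : x ∈ E) : cutoff E r x = 1 := by
  simp [cutoff, infDist_zero_of_mem hx]

theorem cutoff_of_le_infDist {E : Set X} {r : ℝ} (hr : 0 < r) {x : X} (hx : r ≤ infDist x E) :
    cutoff E r x = 0 :=
  max_eq_left (by linarith [(one_le_div hr).2 hx])

theorem lipschitzWith_cutoff (E : Set X) {r : ℝ} (hr : 0 < r) :
    LipschitzWith (Real.toNNReal r⁻¹) (cutoff E r) := by
  refine .of_dist_le_mul fun x y => ?_
  rw [Real.coe_toNNReal _ (inv_nonneg.2 hr.le), Real.dist_eq, cutoff, cutoff, max_comm 0,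
    max_comm 0]
  calc |max (1 - infDist x E / r) 0 - max (1 - infDist y E / r) 0|
      ≤ |(1 - infDist x E / r) - (1 - infDist y E / r)| := abs_max_sub_max_le_abs _ _ _
    _ = r⁻¹ * |infDist x E - infDist y E| := by
      rw [abs_sub_comm (infDist x E), ← abs_of_pos (inv_pos.2 hr), ← abs_mul]
      ring_nf
    _ ≤ r⁻¹ * dist x y := by
      gcongr
      simpa [Real.dist_eq] using (lipschitz_infDist_pt E).dist_le_mul x y

end Cutoff

section FDerivCutoff

variable {X : Type*} [NormedAddCommGroup X] [NormedSpace ℝ X] {E : Set X} {r : ℝ} {x : X}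

theorem fderiv_cutoff_of_mem (hr : 0 ≤ r) (hx : x ∈ E) : fderiv ℝ (cutoff E r) x = 0 :=
  IsLocalMax.fderiv_eq_zero <| .of_forall fun y => by
    rw [cutoff_of_mem r hx]; exact cutoff_le_one E hr y

theorem fderiv_cutoff_of_le_infDist (hr : 0 < r) (hx : r ≤ infDist x E) :
    fderiv ℝ (cutoff E r) x = 0 :=
  IsLocalMin.fderiv_eq_zero <| .of_forall fun y => by
    rw [cutoff_of_le_infDist hr hx]; exact cutoff_nonneg E r y

end FDerivCutoff

theorem setIntegral_divergence_le {n : ℕ} {Ω E : Set (EuclideanSpace ℝ (Fin n))}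
    (hΩ : MeasurableSet Ω) (hΩfin : volume Ω ≠ ⊤) (hE : MeasurableSet E)
    {φ : EuclideanSpace ℝ (Fin n) → EuclideanSpace ℝ (Fin n)} (hφ : ContDiff ℝ 1 φ)
    (hφc : HasCompactSupport φ) (hφΩ : tsupport φ ⊆ Ω) (hφ1 : ∀ x, ‖φ x‖ ≤ 1) {M : ℝ}
    (hM : ∀ x, |divergence φ x| ≤ M) {r : ℝ} (hr : 0 < r) :
    ∫ x in E, divergence φ x ≤
      (r⁻¹ + M) * (volume ((Ω ∩ {x | infDist x E < r}) \ E)).toReal := by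
  set C := (Ω ∩ {x | infDist x E < r}) \ E
  set f := cutoff E r
  have hf := lipschitzWith_cutoff E hr
  have hC : MeasurableSet C :=
    (hΩ.inter (measurableSet_lt (continuous_infDist_pt E).measurable measurable_const)).diff hE
  have hCfin : volume C ≠ ⊤ :=
    ne_top_of_le_ne_top hΩfin (measure_mono (sdiff_subset.trans inter_subset_left))
  have hRM : 0 ≤ r⁻¹ + M := add_nonneg (inv_nonneg.2 hr.le) ((abs_nonneg _).trans (hM 0))
  have hdiv : Integrable (divergence φ) :=
    hφ.continuous_divergence.integrable_of_hasCompactSupport hφc.divergence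
  have hfdiv : Integrable fun x => f x * divergence φ x :=
    (hf.continuous.mul hφ.continuous_divergence).integrable_of_hasCompactSupport
      hφc.divergence.mul_left
  have hDf (x) : ‖fderiv ℝ f x‖ ≤ r⁻¹ := by
    simpa [Real.coe_toNNReal _ (inv_nonneg.2 hr.le)] using norm_fderiv_le_of_lipschitz ℝ hf
  have hDfφ : Integrable fun x => fderiv ℝ f x (φ x) := by
    refine Integrable.mono' ((hφ.continuous.integrable_of_hasCompactSupport hφc).norm.const_mul
      (r⁻¹)) ?_ (.of_forall fun x => ((fderiv ℝ f x).le_opNorm _).trans ?_)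
    · exact (isBoundedBilinearMap_apply.continuous.measurable.comp
        ((measurable_fderiv ℝ f).prodMk hφ.continuous.measurable)).aestronglyMeasurable
    · gcongr
      exact hDf x
  have hsum : Integrable fun x => f x * divergence φ x + fderiv ℝ f x (φ x) := hfdiv.add hDfφ
  have hpt (x) : E.indicator (divergence φ) x - (f x * divergence φ x + fderiv ℝ f x (φ x)) ≤
      C.indicator (fun _ => r⁻¹ + M) x := by
    have hind := indicator_nonneg (fun _ _ => hRM) x (s := C)
    by_cases hxE : x ∈ E
    · simpa [indicator_of_mem hxE, f, cutoff_of_mem r hxE, fderiv_cutoff_of_mem hr.le hxE]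
        using hind
    by_cases hfar : r ≤ infDist x E
    · simpa [indicator_of_notMem hxE, f, cutoff_of_le_infDist hr hfar,
        fderiv_cutoff_of_le_infDist hr hfar] using hind
    by_cases hxΩ : x ∈ Ω
    · rw [indicator_of_notMem hxE, indicator_of_mem (show x ∈ C from ⟨⟨hxΩ, not_le.1 hfar⟩, hxE⟩)]
      have hfx : |f x * divergence φ x| ≤ M := by
        rw [abs_mul, abs_of_nonneg (cutoff_nonneg E r x)]
        simpa using mul_le_mul (cutoff_le_one E hr.le x) (hM x) (abs_nonneg _) zero_le_one
      have hDfx : |fderiv ℝ f x (φ x)| ≤ r⁻¹ :=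
        ((fderiv ℝ f x).le_opNorm _).trans
          (by simpa using mul_le_mul (hDf x) (hφ1 x) (norm_nonneg _) (inv_nonneg.2 hr.le))
      linarith [neg_abs_le (f x * divergence φ x), neg_abs_le (fderiv ℝ f x (φ x))]
    · have hφx : φ x = 0 := image_eq_zero_of_notMem_tsupport fun h => hxΩ (hφΩ h)
      have hdivx : divergence φ x = 0 := divergence_eq_zero_of_notMem_tsupport fun h => hxΩ (hφΩ h)
      simpa [indicator_of_notMem hxE, hφx, hdivx] using hind
  calc ∫ x in E, divergence φ x
      = ∫ x, E.indicator (divergence φ) x - (f x * divergence φ x + fderiv ℝ f x (φ x)) := by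
        rw [integral_sub (hdiv.indicator hE) hsum, integral_add hfdiv hDfφ,
          integral_mul_divergence_eq_neg hf hφ hφc, integral_indicator hE]
        ring
    _ ≤ ∫ x, C.indicator (fun _ => r⁻¹ + M) x :=
        integral_mono ((hdiv.indicator hE).sub hsum)
          ((integrable_indicator_iff hC).2 (integrableOn_const hCfin)) hpt
    _ = (r⁻¹ + M) * (volume C).toReal := by
        rw [integral_indicator_const _ hC, smul_eq_mul, mul_comm]
        rfl

section Distribution

variable {n : ℕ} {Ω : Set (EuclideanSpace ℝ (Fin n))} {u : EuclideanSpace ℝ (Fin n) → ℝ}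

theorem volume_superlevel_ne_top (hΩ : volume Ω ≠ ⊤) (t : ℝ) : volume {x ∈ Ω | t < u x} ≠ ⊤ :=
  ne_top_of_le_ne_top hΩ (measure_mono (sep_subset _ _))

theorem distrib_nonneg (t : ℝ) : 0 ≤ distrib Ω u t := ENNReal.toReal_nonneg

theorem distrib_antitone (hΩ : volume Ω ≠ ⊤) : Antitone (distrib Ω u) := fun _ _ hst =>
  ENNReal.toReal_mono (volume_superlevel_ne_top hΩ _)
    (measure_mono fun _ hx => ⟨hx.1, hst.trans_lt hx.2⟩)

theorem distrib_of_neg (hu0 : ∀ x ∈ Ω, 0 ≤ u x) {t : ℝ} (ht : t < 0) :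
    distrib Ω u t = (volume Ω).toReal := by
  rw [distrib, sep_eq_self_iff_mem_true.2 fun x hx => ht.trans_le (hu0 x hx)]

theorem exists_distrib_eq_zero (hu : BddAbove (u '' Ω)) : ∃ T, distrib Ω u T = 0 := by
  obtain ⟨T, hT⟩ := hu
  refine ⟨T, ?_⟩
  rw [distrib, sep_eq_empty_iff_mem_false.2 fun x hx => not_lt.2 (hT (mem_image_of_mem u hx)),
    measure_empty, ENNReal.toReal_zero]

theorem distrib_continuousWithinAt_Ioi (hΩ : volume Ω ≠ ⊤) (t : ℝ) :
    ContinuousWithinAt (distrib Ω u) (Ioi t) t := by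
  have hmono : Antitone fun s : Ioi t => {x ∈ Ω | (s : ℝ) < u x} :=
    fun _ _ hab _ hx => ⟨hx.1, lt_of_le_of_lt hab hx.2⟩
  have hunion : ⋃ s : Ioi t, {x ∈ Ω | (s : ℝ) < u x} = {x ∈ Ω | t < u x} := by
    ext x
    simp only [mem_iUnion, mem_sep_iff, Subtype.exists, mem_Ioi, exists_prop]
    constructor
    · rintro ⟨s, hts, hx, hsx⟩
      exact ⟨hx, hts.trans hsx⟩
    · rintro ⟨hx, htx⟩
      obtain ⟨s, hts, hsx⟩ := exists_between htx
      exact ⟨s, hts, hx, hsx⟩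
  have hlim := tendsto_measure_iUnion_atBot (μ := volume) hmono
  rw [hunion] at hlim
  rw [ContinuousWithinAt, ← map_coe_Ioi_atBot, tendsto_map'_iff]
  exact (ENNReal.tendsto_toReal (volume_superlevel_ne_top hΩ t)).comp hlim

theorem volume_collar_le {L : NNReal} (hΩo : IsOpen Ω) (hΩ : volume Ω ≠ ⊤)
    (hu : LipschitzOnWith L u Ω) {t r : ℝ} (hne : {x ∈ Ω | t < u x}.Nonempty) (hr : 0 ≤ r) :
    (volume ((Ω ∩ {x | infDist x {x ∈ Ω | t < u x} < r}) \ {x ∈ Ω | t < u x})).toReal ≤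
      distrib Ω u (t - L * r) - distrib Ω u t := by
  set E := {x ∈ Ω | t < u x}
  set C := (Ω ∩ {x | infDist x E < r}) \ E
  have hE : MeasurableSet E := (hu.continuousOn.isOpen_inter_preimage hΩo isOpen_Ioi).measurableSet
  have hCE : C ∪ E ⊆ {x ∈ Ω | t - L * r < u x} := by
    rintro x (⟨⟨hxΩ, hxr⟩, -⟩ | ⟨hxΩ, htx⟩)
    · obtain ⟨y, ⟨hyΩ, hty⟩, hxy⟩ := (infDist_lt_iff hne).1 hxr
      have hyx : -(L * dist x y) ≤ u x - u y :=
        (abs_le.1 ((Real.dist_eq _ _).symm.trans_le (hu.dist_le_mul x hxΩ y hyΩ))).1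
      exact ⟨hxΩ, by nlinarith [L.coe_nonneg]⟩
    · exact ⟨hxΩ, by nlinarith [L.coe_nonneg]⟩
  have hle : volume C + volume E ≤ volume {x ∈ Ω | t - L * r < u x} :=
    (measure_union disjoint_sdiff_left hE).symm.trans_le (measure_mono hCE)
  have hCfin : volume C ≠ ⊤ :=
    ne_top_of_le_ne_top hΩ (measure_mono (sdiff_subset.trans inter_subset_left))
  rw [le_sub_iff_add_le, distrib, distrib,
    ← ENNReal.toReal_add hCfin (volume_superlevel_ne_top hΩ t)]
  exact ENNReal.toReal_mono (volume_superlevel_ne_top hΩ _) hle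

end Distribution

section Rearrangement

variable {n : ℕ} {Ω : Set (EuclideanSpace ℝ (Fin n))} {u : EuclideanSpace ℝ (Fin n) → ℝ} {s : ℝ}

theorem nonneg_of_distrib_le (hu0 : ∀ x ∈ Ω, 0 ≤ u x) (hs : s < (volume Ω).toReal) {t : ℝ}
    (ht : distrib Ω u t ≤ s) : 0 ≤ t :=
  not_lt.1 fun hneg => (ht.trans_lt hs).ne (distrib_of_neg hu0 hneg)

theorem bddBelow_distrib_le (hu0 : ∀ x ∈ Ω, 0 ≤ u x) (hs : s < (volume Ω).toReal) :
    BddBelow {t | distrib Ω u t ≤ s} :=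
  ⟨0, fun _ => nonneg_of_distrib_le hu0 hs⟩

theorem nonempty_distrib_le (hu : BddAbove (u '' Ω)) (hs : 0 ≤ s) :
    {t | distrib Ω u t ≤ s}.Nonempty :=
  (exists_distrib_eq_zero hu).imp fun _ hT => hT.trans_le hs

theorem rearr_nonneg (hu0 : ∀ x ∈ Ω, 0 ≤ u x) (hs : s < (volume Ω).toReal) :
    0 ≤ rearr Ω u s :=
  Real.sInf_nonneg fun _ => nonneg_of_distrib_le hu0 hs

theorem rearr_le_rearr (hu : BddAbove (u '' Ω)) (hu0 : ∀ x ∈ Ω, 0 ≤ u x) {s₁ s₂ : ℝ}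
    (hs₁ : 0 ≤ s₁) (hs : s₁ ≤ s₂) (hs₂ : s₂ < (volume Ω).toReal) :
    rearr Ω u s₂ ≤ rearr Ω u s₁ :=
  csInf_le_csInf (bddBelow_distrib_le hu0 hs₂) (nonempty_distrib_le hu hs₁)
    fun _ ht => le_trans ht hs

theorem distrib_rearr_le (hΩ : volume Ω ≠ ⊤) (hu : BddAbove (u '' Ω)) (hs : 0 ≤ s) :
    distrib Ω u (rearr Ω u s) ≤ s := by
  have hright : ∀ t ∈ Ioi (rearr Ω u s), distrib Ω u t ≤ s := fun t ht => by
    obtain ⟨a, ha, hat⟩ := Real.lt_sInf_add_pos (nonempty_distrib_le hu hs) (sub_pos.2 ht)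
    exact (distrib_antitone hΩ (hat.trans_eq (add_sub_cancel _ _)).le).trans ha
  exact le_of_tendsto (distrib_continuousWithinAt_Ioi hΩ _) (eventually_mem_nhdsWithin.mono hright)

theorem lt_distrib_of_lt_rearr (hu0 : ∀ x ∈ Ω, 0 ≤ u x) (hs : s < (volume Ω).toReal) {t : ℝ}
    (ht : t < rearr Ω u s) : s < distrib Ω u t :=
  not_le.1 fun hle => ht.not_ge (csInf_le (bddBelow_distrib_le hu0 hs) hle)

end Rearrangement

theorem relPerimeter_superlevel_le_of_hasDerivAt {n : ℕ} {Ω : Set (EuclideanSpace ℝ (Fin n))}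
    {u : EuclideanSpace ℝ (Fin n) → ℝ} {L : NNReal} (hΩo : IsOpen Ω) (hΩ : volume Ω ≠ ⊤)
    (hu : LipschitzOnWith L u Ω) {t m : ℝ} (hne : {x ∈ Ω | t < u x}.Nonempty)
    (hd : HasDerivAt (distrib Ω u) m t) :
    relPerimeter Ω {x ∈ Ω | t < u x} ≤ -L * m := by
  have hm : m ≤ 0 := hd.deriv ▸ (distrib_antitone hΩ).deriv_nonpos
  have hE : MeasurableSet {x ∈ Ω | t < u x} :=
    (hu.continuousOn.isOpen_inter_preimage hΩo isOpen_Ioi).measurableSet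
  refine Real.sSup_le ?_ (by nlinarith [L.coe_nonneg])
  rintro _ ⟨φ, hφ, hφc, hφΩ, hφ1, rfl⟩
  obtain ⟨M, hM⟩ := hφ.continuous_divergence.bounded_above_of_compact_support hφc.divergence
  have hM0 : 0 ≤ M := (norm_nonneg _).trans (hM 0)
  refine ge_of_tendsto (hd.tendsto_inv_add_mul_sub_comp_sub L M)
    (eventually_mem_nhdsWithin.mono fun r (hr : 0 < r) => ?_)
  exact (setIntegral_divergence_le hΩo.measurableSet hΩ hE hφ hφc hφΩ hφ1 hM hr).trans
    (mul_le_mul_of_nonneg_left (volume_collar_le hΩo hΩ hu hne hr.le) (by positivity))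

section Isoperimetric

variable {n : ℕ} {Ω : Set (EuclideanSpace ℝ (Fin n))} {u : EuclideanSpace ℝ (Fin n) → ℝ}
  {L : NNReal}

theorem le_mul_neg_deriv_of_isoperimetric (hn : n ≠ 0) (hΩo : IsOpen Ω) (hΩ : volume Ω ≠ ⊤)
    (hu : LipschitzOnWith L u Ω) {γ τ d : ℝ}
    (hiso : γ * distrib Ω u τ ^ ((1 : ℝ) - 1 / n) ≤ relPerimeter Ω {x ∈ Ω | τ < u x})
    (hpos : 0 < distrib Ω u τ) (hd : HasDerivAt (fun t => distrib Ω u t ^ ((1 : ℝ) / n)) d τ) :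
    γ ≤ L * n * -d := by
  have hpow (t : ℝ) : (distrib Ω u t ^ ((1 : ℝ) / n)) ^ n = distrib Ω u t :=
    Real.rpow_one_div_natCast_pow (distrib_nonneg t) hn
  set ν := fun t => distrib Ω u t ^ ((1 : ℝ) / n)
  have hμ : HasDerivAt (distrib Ω u) (n * ν τ ^ (n - 1) * d) τ := by
    rw [← funext hpow]
    exact hd.pow n
  have hne : {x ∈ Ω | τ < u x}.Nonempty := by
    refine nonempty_iff_ne_empty.2 fun h => hpos.ne' ?_
    rw [distrib, h, measure_empty, ENNReal.toReal_zero]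
  have hexp : distrib Ω u τ ^ ((1 : ℝ) - 1 / n) = ν τ ^ (n - 1) := by
    rw [← Real.rpow_natCast, ← Real.rpow_mul (distrib_nonneg τ), Nat.cast_sub (by omega),
      Nat.cast_one]
    congr 1
    field_simp
  have h := (hiso.trans (relPerimeter_superlevel_le_of_hasDerivAt hΩo hΩ hu hne hμ)).trans_eq
    (show -(L : ℝ) * (n * ν τ ^ (n - 1) * d) = L * n * -d * ν τ ^ (n - 1) by ring)
  rw [hexp] at h
  exact le_of_mul_le_mul_right h (pow_pos (Real.rpow_pos_of_pos hpos _) _)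

theorem mul_sub_le_sub_distrib_rpow (hn : n ≠ 0) (hΩo : IsOpen Ω) (hΩ : volume Ω ≠ ⊤)
    (hu : LipschitzOnWith L u Ω) (hL : 0 < (L : ℝ)) {γ : ℝ}
    (hiso : ∀ t : ℝ, 0 ≤ t →
      γ * (distrib Ω u t) ^ ((1 : ℝ) - 1 / n) ≤ relPerimeter Ω {x ∈ Ω | t < u x})
    {a b : ℝ} (ha : 0 ≤ a) (hab : a ≤ b) (hb : 0 < distrib Ω u b) :
    γ / (L * n) * (b - a) ≤ distrib Ω u a ^ ((1 : ℝ) / n) - distrib Ω u b ^ ((1 : ℝ) / n) := by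
  set ν := fun t => distrib Ω u t ^ ((1 : ℝ) / n) with hν
  have hmono : MonotoneOn (fun t => -ν t) (Icc a b) := fun _ _ _ _ hxy =>
    neg_le_neg (Real.rpow_le_rpow (distrib_nonneg _) (distrib_antitone hΩ hxy) (by positivity))
  have key := hmono.mul_sub_le_sub_of_le_deriv (c := γ / (L * n)) hab fun x hx hdiff => by
    have hdν : HasDerivAt ν (-deriv (fun t => -ν t) x) x := by
      have h := hdiff.hasDerivAt.neg
      rwa [show (-fun t => -ν t) = ν by ext; simp] at h
    have := le_mul_neg_deriv_of_isoperimetric hn hΩo hΩ hu (hiso x (ha.trans hx.1.le))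
      (hb.trans_le (distrib_antitone hΩ hx.2.le)) hdν
    rw [div_le_iff₀ (by positivity)]
    linarith
  simp only [hν] at key
  linarith

theorem rearr_pow_sub_rearr_pow_le (hn : n ≠ 0) (hΩo : IsOpen Ω) (hΩ : volume Ω ≠ ⊤)
    (hu : LipschitzOnWith L u Ω) (hL : 0 < (L : ℝ)) (hbdd : BddAbove (u '' Ω))
    (hu0 : ∀ x ∈ Ω, 0 ≤ u x) {γ : ℝ} (hγ : 0 < γ)
    (hiso : ∀ t : ℝ, 0 ≤ t →
      γ * (distrib Ω u t) ^ ((1 : ℝ) - 1 / n) ≤ relPerimeter Ω {x ∈ Ω | t < u x})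
    {σ₁ σ₂ : ℝ} (hσ₁ : 0 ≤ σ₁) (hσ : σ₁ ≤ σ₂) (hσ₂ : σ₂ ^ n < (volume Ω).toReal) :
    rearr Ω u (σ₁ ^ n) - rearr Ω u (σ₂ ^ n) ≤ L * n / γ * (σ₂ - σ₁) := by
  have hpow (t : ℝ) : (distrib Ω u t ^ ((1 : ℝ) / n)) ^ n = distrib Ω u t :=
    Real.rpow_one_div_natCast_pow (distrib_nonneg t) hn
  have hν0 (t : ℝ) : 0 ≤ distrib Ω u t ^ ((1 : ℝ) / n) := Real.rpow_nonneg (distrib_nonneg t) _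
  have hσ₁' : σ₁ ^ n < (volume Ω).toReal := (pow_le_pow_left₀ hσ₁ hσ n).trans_lt hσ₂
  set t₂ := rearr Ω u (σ₂ ^ n)
  have hν₂ : distrib Ω u t₂ ^ ((1 : ℝ) / n) ≤ σ₂ :=
    (pow_le_pow_iff_left₀ (hν0 _) (hσ₁.trans hσ) hn).1
      ((hpow _).trans_le (distrib_rearr_le hΩ hbdd (pow_nonneg (hσ₁.trans hσ) n)))
  have hK : 0 ≤ L * n / γ * (σ₂ - σ₁) := by
    have : 0 ≤ σ₂ - σ₁ := sub_nonneg.2 hσ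
    positivity
  rw [sub_le_iff_le_add']
  refine le_of_forall_lt_imp_le_of_dense fun τ hτ => ?_
  rcases le_or_gt τ t₂ with hτ₂ | hτ₂
  · linarith
  have hμτ := lt_distrib_of_lt_rearr hu0 hσ₁' hτ
  have hν₁ : σ₁ < distrib Ω u τ ^ ((1 : ℝ) / n) :=
    (pow_lt_pow_iff_left₀ hσ₁ (hν0 τ) hn).1 (hμτ.trans_eq (hpow τ).symm)
  have key := mul_sub_le_sub_distrib_rpow hn hΩo hΩ hu hL hiso (rearr_nonneg hu0 hσ₂)
    hτ₂.le ((pow_nonneg hσ₁ n).trans_lt hμτ)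
  calc τ = t₂ + L * n / γ * (γ / (L * n) * (τ - t₂)) := by
        field_simp
        ring
    _ ≤ t₂ + L * n / γ * (σ₂ - σ₁) := by
        gcongr
        linarith

theorem lipschitzOnWith_rearr_pow (hn : n ≠ 0) (hΩo : IsOpen Ω) (hΩ : volume Ω ≠ ⊤)
    (hu : LipschitzOnWith L u Ω) (hL : 0 < (L : ℝ)) (hbdd : BddAbove (u '' Ω))
    (hu0 : ∀ x ∈ Ω, 0 ≤ u x) {γ : ℝ} (hγ : 0 < γ)
    (hiso : ∀ t : ℝ, 0 ≤ t →
      γ * (distrib Ω u t) ^ ((1 : ℝ) - 1 / n) ≤ relPerimeter Ω {x ∈ Ω | t < u x}) :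
    LipschitzOnWith (Real.toNNReal (L * n / γ)) (fun σ => rearr Ω u (σ ^ n))
      {σ | 0 ≤ σ ∧ σ ^ n < (volume Ω).toReal} :=
  AntitoneOn.lipschitzOnWith_of_sub_le
    (fun _ ha _ hb hab =>
      rearr_le_rearr hbdd hu0 (pow_nonneg ha.1 n) (pow_le_pow_left₀ ha.1 hab n) hb.2)
    (fun _ ha _ hb hab =>
      rearr_pow_sub_rearr_pow_le hn hΩo hΩ hu hL hbdd hu0 hγ hiso ha.1 hab hb.2)

end Isoperimetric

section Symmetrization

variable {n : ℕ} {Ω : Set (EuclideanSpace ℝ (Fin n))}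

theorem unitBallVol_pos (n : ℕ) : 0 < unitBallVol n :=
  ENNReal.toReal_pos (measure_ball_pos volume _ one_pos).ne' measure_ball_lt_top.ne

theorem schwarz_eq_rearr_pow (hn : n ≠ 0) (u : EuclideanSpace ℝ (Fin n) → ℝ)
    (x : EuclideanSpace ℝ (Fin n)) :
    schwarz Ω u x = rearr Ω u ((unitBallVol n ^ ((1 : ℝ) / n) * ‖x‖) ^ n) := by
  rw [mul_pow, Real.rpow_one_div_natCast_pow (unitBallVol_pos n).le hn, schwarz]

theorem mapsTo_ballSameVol (hn : n ≠ 0) :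
    MapsTo (fun x => unitBallVol n ^ ((1 : ℝ) / n) * ‖x‖) (ballSameVol Ω)
      {σ | 0 ≤ σ ∧ σ ^ n < (volume Ω).toReal} := fun x hx => by
  rw [ballSameVol, mem_ball_zero_iff] at hx
  have hcn := unitBallVol_pos n
  have hV : 0 ≤ (volume Ω).toReal / unitBallVol n := div_nonneg ENNReal.toReal_nonneg hcn.le
  refine ⟨by positivity, ?_⟩
  calc (unitBallVol n ^ ((1 : ℝ) / n) * ‖x‖) ^ n = unitBallVol n * ‖x‖ ^ n := by
        rw [mul_pow, Real.rpow_one_div_natCast_pow hcn.le hn]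
    _ < unitBallVol n * (((volume Ω).toReal / unitBallVol n) ^ ((1 : ℝ) / n)) ^ n := by
        gcongr
    _ = (volume Ω).toReal := by
        rw [Real.rpow_one_div_natCast_pow hV hn]
        field_simp

end Symmetrization

theorem schwarz_lipschitz_of_isoperimetric {n : ℕ} (hn : 2 ≤ n)
    (Ω : Set (EuclideanSpace ℝ (Fin n))) (u : EuclideanSpace ℝ (Fin n) → ℝ)
    (hΩo : IsOpen Ω) (hΩbd : Bornology.IsBounded Ω)
    (L : NNReal) (hL : 0 < (L : ℝ)) (hu : LipschitzOnWith L u Ω)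
    (hu0 : ∀ x ∈ Ω, 0 ≤ u x)
    (γ : ℝ) (hγ : 0 < γ)
    (hiso : ∀ t : ℝ, 0 ≤ t →
      γ * (distrib Ω u t) ^ ((1 : ℝ) - 1 / n) ≤ relPerimeter Ω {x ∈ Ω | t < u x}) :
    LipschitzOnWith
      (Real.toNNReal ((L : ℝ) * n * (unitBallVol n) ^ ((1 : ℝ) / n) / γ))
      (schwarz Ω u) (ballSameVol Ω) := by
  have hn0 : n ≠ 0 := by omega
  have hρ := lipschitzOnWith_rearr_pow hn0 hΩo hΩbd.measure_lt_top.ne hu hL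
    (hu.isBounded_image hΩbd).bddAbove hu0 hγ hiso
  have hc : 0 ≤ unitBallVol n ^ ((1 : ℝ) / n) := Real.rpow_nonneg (unitBallVol_pos n).le _
  have hK : Real.toNNReal (L * n * unitBallVol n ^ ((1 : ℝ) / n) / γ) =
      Real.toNNReal (L * n / γ) * Real.toNNReal (unitBallVol n ^ ((1 : ℝ) / n)) := by
    rw [← Real.toNNReal_mul (by positivity)]
    ring_nf
  rw [hK, funext (schwarz_eq_rearr_pow hn0 u)]
  exact hρ.comp (lipschitzWith_const_mul_norm hc).lipschitzOnWith (mapsTo_ballSameVol hn0)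
end
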